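/- For all j ≥ 1 and m ≥ 1, the number of 312-avoiding permutations of {1,…,(j+1)m} whose up/down pattern is D^j U D^j U ⋯ U D^j (m blocks of j consecutive D's separated by single U's) equals the Fuss–Catalan number (1/(jm+1))·binom((j+1)m, m), which is the number of dissections of a convex (jm+2)-gon into m pieces each of which is a (j+2)-gon. -/

import Mathlib

/-- A permutation of `{1,…,N}` (as `Equiv.Perm (Fin N)`) is 312-avoiding if there are
no positions `i < j < k` with `π(j) < π(k) < π(i)`. -/
def Avoids312 {N : ℕ} (π : Equiv.Perm (Fin N)) : Prop :=
  ¬ ∃ i j k : Fin N, i < j ∧ j < k ∧ π j < π k ∧ π k < π i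

/-- The up/down pattern of `π` is `(D^j U)^{m-1} D^j`: in 1-indexed terms, position `p`
of the pattern is `U` exactly when `(j+1) ∣ p`; in the 0-indexed formulation, the step
from position `i` to `i+1` is an ascent exactly when `(j+1) ∣ (i+1)`. -/
def PatternDjU (j : ℕ) {N : ℕ} (π : Equiv.Perm (Fin N)) : Prop :=
  ∀ i k : Fin N, (k : ℕ) = (i : ℕ) + 1 → (π i < π k ↔ (j + 1) ∣ ((i : ℕ) + 1))

/-!
A valid permutation is a sequence of `m` decreasing blocks of length `j + 1`. Avoiding 312
forces the block maxima to increase, and forces every other entry of a block to be the largest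
value not used so far that lies below its predecessor. Hence the permutation is determined by
the set of its block maxima `M₀ < ⋯ < M_{m-1}`, and conversely a stack procedure rebuilds a
valid permutation from any such set with `(j + 1) (t + 1) ≤ M_t + 1` for all `t`.

Shifted by one and read in `ZMod ((j + 1) m + 1)`, these sets are exactly the `m`-subsets along
which the walk with step `+1` off the set and `-j` on it stays positive. The steps sum to `1`
over a period, so by the cycle lemma exactly one rotation of each `m`-subset has this property:
there are `binom((j + 1) m + 1, m) / ((j + 1) m + 1) = binom((j + 1) m, m) / (j m + 1)` of them.
-/

open Finset

theorem existsUnique_lt_forall_lt_add_of_add_period {L : ℕ} (hL : 0 < L) (P : ℕ → ℤ)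
    (hP : ∀ q, P (q + L) = P q + 1) : ∃! a, a < L ∧ ∀ p ∈ Icc 1 L, P a < P (a + p) := by
  obtain ⟨a₀, ha₀, hmin⟩ := exists_min_image (range L) P ⟨0, mem_range.2 hL⟩
  -- The good starting point is the last minimiser of `P` on one period.
  obtain ⟨a, ⟨haL, ha⟩, hlast⟩ : ∃ a, (a < L ∧ P a = P a₀) ∧ ∀ q < L, P q = P a₀ → q ≤ a := by
    obtain ⟨a, ha, hlast⟩ := exists_max_image {q ∈ range L | P q = P a₀} id ⟨a₀, by simp [ha₀]⟩
    simp only [mem_filter, mem_range, id] at ha hlast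
    exact ⟨a, ha, fun q hq hPq => hlast q ⟨hq, hPq⟩⟩
  have hgood : ∀ p ∈ Icc 1 L, P a < P (a + p) := by
    intro p hp
    obtain ⟨hp1, hpL⟩ := mem_Icc.1 hp
    rcases lt_or_ge (a + p) L with h | h
    · have h₁ := hmin _ (mem_range.2 h)
      have h₂ : P (a + p) ≠ P a₀ := fun he => by have := hlast _ h he; omega
      omega
    · have h₁ := hP (a + p - L)
      rw [Nat.sub_add_cancel h] at h₁
      have h₂ := hmin (a + p - L) (mem_range.2 (by omega))
      omega
  -- Two good starting points `a < b` would give `P a < P b < P (a + L) = P a + 1`.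
  have hnot (a b : ℕ) (hab : a < b) (hbL : b < L) (ha : ∀ p ∈ Icc 1 L, P a < P (a + p)) :
      ¬ ∀ p ∈ Icc 1 L, P b < P (b + p) := fun hb => by
    have h₁ := ha (b - a) (mem_Icc.2 ⟨by omega, by omega⟩)
    have h₂ := hb (a + L - b) (mem_Icc.2 ⟨by omega, by omega⟩)
    rw [Nat.add_sub_cancel' hab.le] at h₁
    rw [show b + (a + L - b) = a + L by omega, hP] at h₂
    omega
  refine ⟨a, ⟨haL, hgood⟩, fun b ⟨hbL, hb⟩ => ?_⟩
  rcases lt_trichotomy a b with h | h | h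
  · exact absurd hb (hnot a b h hbL hgood)
  · exact h.symm
  · exact absurd hgood (hnot b a h haL hb)

theorem ZMod.sum_range_natCast_add {L : ℕ} [NeZero L] {M : Type*} [AddCommMonoid M]
    (g : ZMod L → M) (a : ZMod L) : ∑ i ∈ range L, g (a + i) = ∑ x, g x := by
  rw [← Fintype.sum_equiv (Equiv.addLeft a) (fun x => g (a + x)) g (fun _ => rfl)]
  exact sum_nbij' (fun i => (i : ZMod L)) ZMod.val (by simp) (by simp [ZMod.val_lt])
    (fun i hi => ZMod.val_cast_of_lt (mem_range.1 hi)) (by simp) (by simp)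

theorem ZMod.sum_range_add_eq_sub {L : ℕ} [NeZero L] (f : ZMod L → ℤ) (r : ZMod L) (p : ℕ) :
    ∑ i ∈ range p, f (r + i) = ∑ i ∈ range (r.val + p), f i - ∑ i ∈ range r.val, f i := by
  rw [sum_range_add]
  simp

theorem ZMod.existsUnique_forall_sum_range_pos {L : ℕ} [NeZero L] (f : ZMod L → ℤ)
    (hf : ∑ x, f x = 1) : ∃! r : ZMod L, ∀ p ∈ Icc 1 L, 0 < ∑ i ∈ range p, f (r + i) := by
  have hperiod (q : ℕ) : ∑ i ∈ range (q + L), f i = ∑ i ∈ range q, f i + 1 := by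
    rw [sum_range_add, ← hf, ← ZMod.sum_range_natCast_add f q]
    simp
  obtain ⟨a, ⟨haL, ha⟩, huniq⟩ := existsUnique_lt_forall_lt_add_of_add_period
    (Nat.pos_of_neZero L) (fun q => ∑ i ∈ range q, f i) hperiod
  refine ⟨a, fun p hp => ?_, fun r hr => ?_⟩
  · rw [ZMod.sum_range_add_eq_sub, ZMod.val_cast_of_lt haL, sub_pos]
    exact ha p hp
  · rw [← ZMod.natCast_zmod_val r, huniq r.val ⟨ZMod.val_lt r, fun p hp => ?_⟩]
    have := hr p hp
    rwa [ZMod.sum_range_add_eq_sub, sub_pos] at this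

theorem ZMod.card_filter_range_natCast_mem_image {L : ℕ} {ι : Type*} [Fintype ι] {g : ι → ℕ}
    (hg : Function.Injective g) (hgL : ∀ t, g t < L) {p : ℕ} (hp : p ≤ L) :
    #{i ∈ range p | ((i : ℕ) : ZMod L) ∈ univ.image fun t => (g t : ZMod L)} = #{t | g t < p} := by
  rw [← card_image_of_injective (univ.filter fun t => g t < p) hg]
  congr 1
  ext i
  simp only [mem_filter, mem_range, mem_image, mem_univ, true_and]
  constructor
  · rintro ⟨hip, t, ht⟩
    have : g t = i := by
      have := congrArg ZMod.val ht
      rwa [ZMod.val_cast_of_lt (hgL t), ZMod.val_cast_of_lt (by omega)] at this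
    exact ⟨t, this ▸ hip, this⟩
  · rintro ⟨t, ht, rfl⟩
    exact ⟨ht, t, rfl⟩

theorem Nat.nth_mem_finset {K : Finset ℕ} {m t : ℕ} (hK : #K = m) (ht : t < m) :
    Nat.nth (· ∈ K) t ∈ K :=
  Nat.nth_mem_of_lt_card K.finite_toSet (by simpa [hK] using ht)

theorem Nat.strictMonoOn_nth_finset {K : Finset ℕ} {m : ℕ} (hK : #K = m) :
    StrictMonoOn (Nat.nth (· ∈ K)) (Set.Iio m) := by
  simpa [hK] using Nat.nth_strictMonoOn K.finite_toSet

theorem Nat.image_nth_finset {K : Finset ℕ} {m : ℕ} (hK : #K = m) :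
    univ.image (fun t : Fin m => Nat.nth (· ∈ K) t) = K := by
  ext x
  simp only [mem_image, mem_univ, true_and]
  refine ⟨fun ⟨t, ht⟩ => ht ▸ Nat.nth_mem_finset hK t.isLt, fun hx => ?_⟩
  obtain ⟨n, hn, hnx⟩ := Nat.exists_lt_card_finite_nth_eq K.finite_toSet hx
  exact ⟨⟨n, by simpa [hK] using hn⟩, hnx⟩

def IsBallot {L : ℕ} (k : ℕ) (s : Finset (ZMod L)) : Prop :=
  ∀ p ∈ Icc 1 L, k * #{i ∈ range p | ((i : ℕ) : ZMod L) ∈ s} < p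

section Ballot

variable {L : ℕ} [NeZero L]

theorem existsUnique_isBallot_map_subRight {k : ℕ} {s : Finset (ZMod L)} (hs : k * #s + 1 = L) :
    ∃! r : ZMod L, IsBallot k (s.map (Equiv.subRight r).toEmbedding) := by
  let f : ZMod L → ℤ := fun x => 1 - k * if x ∈ s then 1 else 0
  have hf : ∑ x, f x = 1 := by
    simp only [f, sum_sub_distrib, ← mul_sum, sum_boole, sum_const, card_univ, ZMod.card,
      Int.nsmul_eq_mul, mul_one, subset_univ, filter_mem_eq_of_subset]
    omega
  have hsum (r : ZMod L) (p : ℕ) : ∑ i ∈ range p, f (r + i) =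
      p - k * #{i ∈ range p | ((i : ℕ) : ZMod L) ∈ s.map (Equiv.subRight r).toEmbedding} := by
    simp [f, sum_sub_distrib, mul_ite, add_comm r, sum_ite, mul_comm]
  have key (r : ZMod L) : IsBallot k (s.map (Equiv.subRight r).toEmbedding) ↔
      ∀ p ∈ Icc 1 L, 0 < ∑ i ∈ range p, f (r + i) := by
    refine forall₂_congr fun p _ => ?_
    rw [hsum, sub_pos]
    norm_cast
  simpa only [key] using ZMod.existsUnique_forall_sum_range_pos f hf

variable (L) in
noncomputable def rotateBallotEquiv (k m : ℕ) (h : k * m + 1 = L) :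
    ZMod L × {s : Finset (ZMod L) // #s = m ∧ IsBallot k s} ≃ {s : Finset (ZMod L) // #s = m} :=
  Equiv.ofBijective (fun x => ⟨x.2.1.map (Equiv.addRight x.1).toEmbedding, by simp [x.2.2.1]⟩) <| by
    have hsub (r : ZMod L) (b : Finset (ZMod L)) :
        (b.map (Equiv.addRight r).toEmbedding).map (Equiv.subRight r).toEmbedding = b := by
      ext; simp
    constructor
    · rintro ⟨r₁, b₁, hb₁, hbal₁⟩ ⟨r₂, b₂, hb₂, hbal₂⟩ heq
      simp only [Subtype.mk.injEq] at heq
      obtain rfl : r₁ = r₂ := (existsUnique_isBallot_map_subRight (k := k)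
        (s := b₁.map (Equiv.addRight r₁).toEmbedding) (by simp [hb₁, h])).unique
        (by rwa [hsub]) (by rwa [heq, hsub])
      simpa using heq
    · rintro ⟨s, hs⟩
      obtain ⟨r, hr, -⟩ := existsUnique_isBallot_map_subRight (k := k) (s := s) (by rw [hs, h])
      exact ⟨⟨r, s.map (Equiv.subRight r).toEmbedding, by simp [hs], hr⟩, by ext; simp⟩

theorem card_isBallot_mul (k m : ℕ) (h : k * m + 1 = L) :
    L * Nat.card {s : Finset (ZMod L) // #s = m ∧ IsBallot k s} = L.choose m := by
  have := Nat.card_congr (rotateBallotEquiv L k m h)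
  rw [Nat.card_prod, Nat.card_zmod] at this
  simp [this, Nat.card_eq_fintype_card, Fintype.card_finset_len]

end Ballot

section Avoids312

variable {N : ℕ} {π σ : Equiv.Perm (Fin N)}

theorem lt_of_avoids312 (hA : Avoids312 π) {i i' k : Fin N} (hii' : i < i')
    (h₁ : π i' < π k) (h₂ : π k < π i) : k < i' :=
  lt_of_le_of_ne (not_lt.1 fun h => hA ⟨i, i', k, hii', h, h₁, h₂⟩) fun h => (h ▸ h₁).false

theorem apply_le_apply_of_eqOn_lt (hA : Avoids312 π) {i i' : Fin N} (hii' : i < i')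
    (hσ : σ i' < σ i) (heq : ∀ k < i', π k = σ k) : σ i' ≤ π i' := by
  by_contra! hlt
  have hk : π.symm (σ i') < i' :=
    lt_of_avoids312 hA hii' (by simpa using hlt) (by simpa [heq i hii'] using hσ)
  exact hk.ne (σ.injective (by rw [← heq _ hk]; simp))

end Avoids312

section Blocks

variable {j m : ℕ}

def blockPos : Fin m × Fin (j + 1) ≃ Fin ((j + 1) * m) :=
  finProdFinEquiv.trans (finCongr (Nat.mul_comm m (j + 1)))

@[simp] theorem blockPos_val (x : Fin m × Fin (j + 1)) :
    (blockPos x : ℕ) = (j + 1) * x.1 + x.2 := by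
  simp [blockPos, finProdFinEquiv, add_comm]

theorem blockPos_lt_blockPos_of_lt {t t' : Fin m} (h : t < t') (r r' : Fin (j + 1)) :
    blockPos (t, r) < blockPos (t', r') := by
  rw [Fin.lt_def, blockPos_val, blockPos_val]
  have h₁ : (j + 1) * (t + 1) ≤ (j + 1) * t' := Nat.mul_le_mul_left _ h
  have h₂ := r.isLt
  rw [Nat.mul_add, mul_one] at h₁
  dsimp only
  omega

theorem le_of_blockPos_lt_blockPos {t t' : Fin m} {r r' : Fin (j + 1)}
    (h : blockPos (t, r) < blockPos (t', r')) : t ≤ t' :=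
  not_lt.1 fun h' => (blockPos_lt_blockPos_of_lt h' r' r).not_gt h

theorem dvd_blockPos_add_one_iff (x : Fin m × Fin (j + 1)) :
    j + 1 ∣ (blockPos x : ℕ) + 1 ↔ x.2 = Fin.last j := by
  rw [blockPos_val, add_assoc, Nat.dvd_add_right (dvd_mul_right _ _), Fin.ext_iff, Fin.val_last]
  constructor
  · intro h; have := Nat.le_of_dvd (Nat.succ_pos _) h; have := x.2.isLt; omega
  · intro h; rw [h]

theorem patternDjU_iff {π : Equiv.Perm (Fin ((j + 1) * m))} : PatternDjU j π ↔
    (∀ t, StrictAnti fun r => π (blockPos (t, r))) ∧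
      ∀ t t' : Fin m, (t' : ℕ) = t + 1 → π (blockPos (t, Fin.last j)) < π (blockPos (t', 0)) := by
  constructor
  · intro hP
    refine ⟨fun t => Fin.strictAnti_iff_succ_lt.2 fun r => ?_, fun t t' ht => ?_⟩
    · have hstep := hP (blockPos (t, r.castSucc)) (blockPos (t, r.succ)) (by
        simp only [blockPos_val, Fin.val_succ, Fin.val_castSucc]; omega)
      rw [dvd_blockPos_add_one_iff] at hstep
      refine lt_of_le_of_ne (not_lt.1 fun h => absurd (hstep.1 h) (Fin.castSucc_lt_last r).ne) ?_
      simp [Prod.ext_iff, Fin.ext_iff]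
    · refine (hP _ _ ?_).2 ((dvd_blockPos_add_one_iff _).2 rfl)
      simp only [blockPos_val, ht, Fin.coe_ofNat_eq_mod, Nat.zero_mod, add_zero, Fin.val_last]
      ring
  · rintro ⟨hdesc, hasc⟩ i k hk
    obtain ⟨⟨t, r⟩, rfl⟩ := blockPos.surjective i
    rw [dvd_blockPos_add_one_iff]
    by_cases hr : r = Fin.last j
    · subst hr
      have ht : (t : ℕ) + 1 < m := by
        refine Nat.lt_of_mul_lt_mul_left (a := j + 1) ?_
        have := k.isLt
        simp only [hk, blockPos_val, Fin.val_last] at this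
        linarith
      obtain rfl : k = blockPos (⟨t + 1, ht⟩, 0) := Fin.ext (by
        simp only [hk, blockPos_val, Fin.val_last, Fin.coe_ofNat_eq_mod, Nat.zero_mod, add_zero]
        ring)
      simpa using hasc t _ rfl
    · have hr' : (r : ℕ) + 1 < j + 1 := by have := Fin.val_lt_last hr; omega
      obtain rfl : k = blockPos (t, ⟨r + 1, hr'⟩) := Fin.ext (by simp only [hk, blockPos_val]; omega)
      simpa [hr] using (hdesc t (show r < ⟨r + 1, hr'⟩ from Fin.lt_def.2 (by simp))).le

end Blocks

section Valid

variable {j m : ℕ} {π σ : Equiv.Perm (Fin ((j + 1) * m))}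

def blockMax (π : Equiv.Perm (Fin ((j + 1) * m))) (t : Fin m) : ℕ := π (blockPos (t, 0))

theorem blockMax_injective : Function.Injective (blockMax π) := fun _ _ h =>
  (Prod.ext_iff.1 (blockPos.injective (π.injective (Fin.ext h)))).1

theorem apply_blockPos_le_blockMax (hP : PatternDjU j π) (x : Fin m × Fin (j + 1)) :
    (π (blockPos x) : ℕ) ≤ blockMax π x.1 :=
  ((patternDjU_iff.1 hP).1 x.1).antitone (Fin.zero_le x.2)

theorem blockMax_strictMono (hA : Avoids312 π) (hP : PatternDjU j π) : StrictMono (blockMax π) := by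
  intro t t' htt'
  refine lt_of_le_of_ne (not_lt.1 fun hlt => ?_) (blockMax_injective.ne htt'.ne)
  -- Otherwise the starts of blocks `t` and `t'` and the end of block `t' - 1` form a 312.
  set s : Fin m := ⟨t' - 1, by omega⟩
  have hasc := (patternDjU_iff.1 hP).2 s t' (by simp only [s]; omega)
  have hlast : π (blockPos (s, Fin.last j)) < π (blockPos (t, 0)) :=
    hasc.trans (Fin.lt_def.2 hlt)
  have hpos : blockPos (t, 0) < blockPos (s, Fin.last j) := by
    refine lt_of_le_of_ne ?_ fun h => (h ▸ hlast).false
    rw [Fin.le_def, blockPos_val, blockPos_val]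
    have : (j + 1) * t ≤ (j + 1) * s := Nat.mul_le_mul_left _ (by simp only [s]; omega)
    simp only [Fin.val_zero, Fin.val_last]
    omega
  exact hA ⟨_, _, _, hpos, blockPos_lt_blockPos_of_lt (Fin.lt_def.2 (by simp only [s]; omega)) _ _,
    hasc, Fin.lt_def.2 hlt⟩

theorem eq_of_blockMax_eq (hπ : Avoids312 π ∧ PatternDjU j π) (hσ : Avoids312 σ ∧ PatternDjU j σ)
    (h : blockMax π = blockMax σ) : π = σ := by
  ext1 i
  induction i using WellFoundedLT.induction with
  | _ i ih =>
    obtain ⟨⟨t, r⟩, rfl⟩ := blockPos.surjective i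
    cases r using Fin.cases with
    | zero => exact Fin.ext (congrFun h t)
    | succ r =>
      have hprev : blockPos (t, r.castSucc) < blockPos (t, r.succ) := by simp [Fin.lt_def]
      have hdesc (τ : Equiv.Perm (Fin ((j + 1) * m))) (hτ : PatternDjU j τ) :
          τ (blockPos (t, r.succ)) < τ (blockPos (t, r.castSucc)) :=
        (patternDjU_iff.1 hτ).1 t Fin.castSucc_lt_succ
      exact le_antisymm
        (apply_le_apply_of_eqOn_lt hσ.1 hprev (hdesc π hπ.2) fun k hk => (ih k hk).symm)
        (apply_le_apply_of_eqOn_lt hπ.1 hprev (hdesc σ hσ.2) ih)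

theorem mul_card_blockMax_lt_le (hP : PatternDjU j π) (q : ℕ) :
    (j + 1) * #{t | blockMax π t < q} ≤ q := by
  have := card_le_card_of_injOn (fun x => (π (blockPos x) : ℕ))
    (s := (univ.filter fun t => blockMax π t < q) ×ˢ (univ : Finset (Fin (j + 1))))
    (t := range q)
    (fun x hx => mem_range.2 ((apply_blockPos_le_blockMax hP x).trans_lt (by simpa using hx)))
    (fun x _ y _ h => blockPos.injective (π.injective (Fin.ext h)))
  simpa [card_product, mul_comm] using this

end Valid

-- `c t` plays the role of `M_t + 1`, one more than the maximum of block `t`.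
structure Admissible (j m : ℕ) (c : ℕ → ℕ) : Prop where
  strictMonoOn : StrictMonoOn c (Set.Iio m)
  le_apply : ∀ t < m, (j + 1) * (t + 1) ≤ c t
  apply_le : ∀ t < m, c t ≤ (j + 1) * m

theorem Admissible.pos {j m t : ℕ} {c : ℕ → ℕ} (ha : Admissible j m c) (ht : t < m) : 0 < c t :=
  lt_of_lt_of_le (by positivity) (ha.le_apply t ht)

section Construction

variable (j : ℕ) (c : ℕ → ℕ)

-- The values `0, 1, 2, …` are pushed on a stack in increasing order; once every value below
-- `c t` has been pushed, the top `j + 1` entries are popped and form block `t`.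
def popped : ℕ → Finset ℕ
  | 0 => ∅
  | t + 1 => popped t ∪ (((range (c t) \ popped t).sort (· ≥ ·)).take (j + 1)).toFinset

def stack (t : ℕ) : List ℕ := (range (c t) \ popped j c t).sort (· ≥ ·)

def blockVal (t r : ℕ) : ℕ := (stack j c t).getD r 0

variable {j c} {m t t' r r' : ℕ}

theorem popped_succ (t : ℕ) :
    popped j c (t + 1) = popped j c t ∪ ((stack j c t).take (j + 1)).toFinset := rfl

theorem mem_stack {v : ℕ} : v ∈ stack j c t ↔ v < c t ∧ v ∉ popped j c t := by
  simp [stack]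

theorem sortedGT_stack (t : ℕ) : (stack j c t).SortedGT := sortedGT_sort _

theorem popped_mono : Monotone (popped j c) :=
  monotone_nat_of_le_succ fun t => by rw [popped_succ]; exact subset_union_left

theorem lt_of_mem_take_stack {x : ℕ} (hx : x ∈ (stack j c t).take (j + 1)) : x < c t :=
  (mem_stack.1 (List.mem_of_mem_take hx)).1

theorem popped_succ_subset_range (hc : StrictMonoOn c (Set.Iio m)) :
    ∀ t < m, popped j c (t + 1) ⊆ range (c t) := by
  have htake (t : ℕ) : ((stack j c t).take (j + 1)).toFinset ⊆ range (c t) := fun x hx =>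
    mem_range.2 (lt_of_mem_take_stack (List.mem_toFinset.1 hx))
  intro t
  induction t with
  | zero => exact fun _ => union_subset (by simp [popped]) (htake 0)
  | succ t ih =>
    intro ht
    refine union_subset ((ih (by omega)).trans (range_subset_range.2 ?_)) (htake _)
    exact hc.monotoneOn (Set.mem_Iio.2 (by omega)) (Set.mem_Iio.2 ht) (by omega)

theorem popped_subset_range (hc : StrictMonoOn c (Set.Iio m)) (ht : t < m) :
    popped j c t ⊆ range (c t) := by
  cases t with
  | zero => simp [popped]
  | succ t =>
    exact (popped_succ_subset_range hc t (by omega)).trans (range_subset_range.2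
      (hc.monotoneOn (Set.mem_Iio.2 (by omega)) (Set.mem_Iio.2 ht) (by omega)))

theorem length_stack_eq (hc : StrictMonoOn c (Set.Iio m)) (ht : t < m) :
    (stack j c t).length = c t - #(popped j c t) := by
  rw [stack, length_sort, card_sdiff_of_subset (popped_subset_range hc ht), card_range]

theorem card_popped (ha : Admissible j m c) : ∀ t ≤ m, #(popped j c t) = (j + 1) * t := by
  intro t
  induction t with
  | zero => simp [popped]
  | succ t ih =>
    intro ht
    have hlen : j + 1 ≤ (stack j c t).length := by
      have := ha.le_apply t (by omega)
      rw [length_stack_eq ha.strictMonoOn (by omega), ih (by omega)]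
      rw [Nat.mul_add, mul_one] at this
      omega
    have hdisj : Disjoint (popped j c t) ((stack j c t).take (j + 1)).toFinset :=
      disjoint_right.2 fun x hx => (mem_stack.1 (List.mem_of_mem_take (List.mem_toFinset.1 hx))).2
    have hnodup : ((stack j c t).take (j + 1)).Nodup :=
      (sortedGT_stack t).nodup.sublist (List.take_sublist _ _)
    rw [popped_succ, card_union_of_disjoint hdisj, ih (by omega),
      List.toFinset_card_of_nodup hnodup, List.length_take, min_eq_left hlen, Nat.mul_add, mul_one]

theorem le_length_stack (ha : Admissible j m c) (ht : t < m) : j + 1 ≤ (stack j c t).length := by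
  have := ha.le_apply t ht
  rw [length_stack_eq ha.strictMonoOn ht, card_popped ha t ht.le]
  rw [Nat.mul_add, mul_one] at this
  omega

theorem blockVal_eq_getElem (ha : Admissible j m c) (ht : t < m) (hr : r < j + 1) :
    blockVal j c t r = (stack j c t)[r]'(lt_of_lt_of_le hr (le_length_stack ha ht)) :=
  List.getD_eq_getElem _ _ _

theorem blockVal_mem_take (ha : Admissible j m c) (ht : t < m) (hr : r < j + 1) :
    blockVal j c t r ∈ (stack j c t).take (j + 1) := by
  rw [blockVal_eq_getElem ha ht hr, ← List.getElem_take (j := j + 1)]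
  · exact List.getElem_mem _
  · rw [List.length_take]
    exact lt_min hr (lt_of_lt_of_le hr (le_length_stack ha ht))

theorem blockVal_lt_blockVal (ha : Admissible j m c) (ht : t < m) (hr' : r' < j + 1)
    (h : r < r') : blockVal j c t r' < blockVal j c t r := by
  rw [blockVal_eq_getElem ha ht hr', blockVal_eq_getElem ha ht (h.trans hr')]
  exact (sortedGT_stack t).getElem_gt_getElem_of_lt h

theorem blockVal_zero (ha : Admissible j m c) (ht : t < m) : blockVal j c t 0 = c t - 1 := by
  have hpos := ha.pos ht
  have hmem : c t - 1 ∈ stack j c t := by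
    refine mem_stack.2 ⟨by omega, fun h => ?_⟩
    cases t with
    | zero => simp [popped] at h
    | succ s =>
      have h₁ := mem_range.1 (popped_succ_subset_range ha.strictMonoOn s (by omega) h)
      have h₂ := ha.strictMonoOn (Set.mem_Iio.2 (by omega)) (Set.mem_Iio.2 ht) (by omega : s < s + 1)
      omega
  obtain ⟨k, hk, hk'⟩ := List.getElem_of_mem hmem
  have hle : c t - 1 ≤ blockVal j c t 0 := by
    rw [blockVal_eq_getElem ha ht (Nat.succ_pos j), ← hk']
    exact (sortedGT_stack t).sortedGE.getElem_ge_getElem_of_le (Nat.zero_le k)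
  have hlt := lt_of_mem_take_stack (blockVal_mem_take ha ht (Nat.succ_pos j))
  omega

theorem lt_of_mem_take_of_mem_stack {x v : ℕ} (htt' : t < t')
    (hx : x ∈ (stack j c t).take (j + 1)) (hv : v ∈ stack j c t') (hvc : v < c t) : v < x := by
  have hv' : v ∉ popped j c (t + 1) := fun h => (mem_stack.1 hv).2 (popped_mono htt' h)
  rw [popped_succ, mem_union, not_or, List.mem_toFinset] at hv'
  have hvs : v ∈ stack j c t := mem_stack.2 ⟨hvc, hv'.1⟩
  rw [← List.take_append_drop (j + 1) (stack j c t), List.mem_append] at hvs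
  have hpw := (sortedGT_stack (j := j) (c := c) t).pairwise
  rw [← List.take_append_drop (j + 1) (stack j c t), List.pairwise_append] at hpw
  exact hpw.2.2 x hx v (hvs.resolve_left hv'.2)

end Construction

section OfAdmissible

variable {j m : ℕ} {c : ℕ → ℕ}

theorem blockVal_lt (ha : Admissible j m c) (x : Fin m × Fin (j + 1)) :
    blockVal j c x.1 x.2 < (j + 1) * m :=
  (lt_of_mem_take_stack (blockVal_mem_take ha x.1.isLt x.2.isLt)).trans_le (ha.apply_le _ x.1.isLt)

theorem blockVal_injective (ha : Admissible j m c) :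
    Function.Injective fun x : Fin m × Fin (j + 1) => blockVal j c x.1 x.2 := by
  have hne (x y : Fin m × Fin (j + 1)) (hxy : x.1 < y.1) :
      blockVal j c x.1 x.2 ≠ blockVal j c y.1 y.2 := by
    intro h
    have hx : blockVal j c x.1 x.2 ∈ popped j c (x.1 + 1) := by
      rw [popped_succ]
      exact mem_union_right _ (List.mem_toFinset.2 (blockVal_mem_take ha x.1.isLt x.2.isLt))
    have hy := List.mem_of_mem_take (blockVal_mem_take ha y.1.isLt y.2.isLt)
    exact (mem_stack.1 hy).2 (popped_mono (Nat.succ_le_of_lt hxy) (h ▸ hx))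
  rintro ⟨t, r⟩ ⟨t', r'⟩ h
  rcases lt_trichotomy t t' with htt' | rfl | htt'
  · exact absurd h (hne _ _ htt')
  · rcases lt_trichotomy r r' with hr | rfl | hr
    · exact absurd h (blockVal_lt_blockVal ha t.isLt r'.isLt (Fin.lt_def.1 hr)).ne'
    · rfl
    · exact absurd h (blockVal_lt_blockVal ha t.isLt r.isLt (Fin.lt_def.1 hr)).ne
  · exact absurd h.symm (hne _ _ htt')

noncomputable def ofAdmissible (ha : Admissible j m c) : Equiv.Perm (Fin ((j + 1) * m)) :=
  blockPos.symm.trans <| Equiv.ofBijective (fun x => ⟨blockVal j c x.1 x.2, blockVal_lt ha x⟩) <|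
    (Fintype.bijective_iff_injective_and_card _).2
      ⟨fun x y h => blockVal_injective ha (Fin.val_eq_of_eq h), by simp [mul_comm]⟩

theorem ofAdmissible_blockPos (ha : Admissible j m c) (x : Fin m × Fin (j + 1)) :
    (ofAdmissible ha (blockPos x) : ℕ) = blockVal j c x.1 x.2 := by
  simp [ofAdmissible]

theorem blockMax_ofAdmissible (ha : Admissible j m c) (t : Fin m) :
    blockMax (ofAdmissible ha) t + 1 = c t := by
  have := ha.pos t.isLt
  rw [blockMax, ofAdmissible_blockPos, Fin.val_zero, blockVal_zero ha t.isLt]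
  omega

theorem patternDjU_ofAdmissible (ha : Admissible j m c) : PatternDjU j (ofAdmissible ha) := by
  refine patternDjU_iff.2 ⟨fun t r r' h => ?_, fun t t' ht => ?_⟩
  · simpa [Fin.lt_def, ofAdmissible_blockPos] using blockVal_lt_blockVal ha t.isLt r'.isLt h
  · have h₁ := lt_of_mem_take_stack (blockVal_mem_take ha t.isLt (Fin.last j).isLt)
    have h₂ := ha.strictMonoOn t.isLt t'.isLt (by omega)
    have h₃ := blockMax_ofAdmissible ha t'
    rw [blockMax] at h₃
    rw [Fin.lt_def, ofAdmissible_blockPos]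
    dsimp only
    omega

theorem avoids312_ofAdmissible (ha : Admissible j m c) : Avoids312 (ofAdmissible ha) := by
  rintro ⟨i, i', k, hii', hi'k, hlo, hhi⟩
  obtain ⟨⟨a, ra⟩, rfl⟩ := blockPos.surjective i
  obtain ⟨⟨a', r₁⟩, rfl⟩ := blockPos.surjective i'
  obtain ⟨⟨b, r₂⟩, rfl⟩ := blockPos.surjective k
  rw [Fin.lt_def, ofAdmissible_blockPos, ofAdmissible_blockPos] at hlo hhi
  dsimp only at hlo hhi
  rcases (le_of_blockPos_lt_blockPos hi'k).lt_or_eq with hlt | rfl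
  · -- The value at `k` is still on the stack when block `a'` is popped, so it lies below it.
    have hc : c a ≤ c a' :=
      ha.strictMonoOn.monotoneOn a.isLt a'.isLt (le_of_blockPos_lt_blockPos hii')
    have := lt_of_mem_take_of_mem_stack hlt (blockVal_mem_take ha a'.isLt r₁.isLt)
      (List.mem_of_mem_take (blockVal_mem_take ha b.isLt r₂.isLt))
      ((hhi.trans (lt_of_mem_take_stack (blockVal_mem_take ha a.isLt ra.isLt))).trans_le hc)
    omega
  · have hr : (r₁ : ℕ) < r₂ := by
      have := Fin.lt_def.1 hi'k
      simp only [blockPos_val] at this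
      omega
    have := blockVal_lt_blockVal ha a'.isLt r₂.isLt hr
    omega

end OfAdmissible

section Equivalence

variable {j m : ℕ} {π σ : Equiv.Perm (Fin ((j + 1) * m))}

def blockMaxSet (π : Equiv.Perm (Fin ((j + 1) * m))) : Finset (ZMod ((j + 1) * m + 1)) :=
  univ.image fun t => ((blockMax π t + 1 : ℕ) : ZMod ((j + 1) * m + 1))

theorem blockMax_add_one_lt (t : Fin m) : blockMax π t + 1 < (j + 1) * m + 1 :=
  Nat.succ_lt_succ (π (blockPos (t, 0))).isLt

theorem card_blockMaxSet : #(blockMaxSet π) = m := by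
  rw [blockMaxSet, card_image_of_injective, card_univ, Fintype.card_fin]
  intro t t' h
  have := congrArg ZMod.val h
  rw [ZMod.val_cast_of_lt (blockMax_add_one_lt t), ZMod.val_cast_of_lt (blockMax_add_one_lt t')]
    at this
  exact blockMax_injective (Nat.succ_injective this)

theorem isBallot_blockMaxSet (hP : PatternDjU j π) : IsBallot (j + 1) (blockMaxSet π) := by
  intro p hp
  obtain ⟨hp1, hpL⟩ := mem_Icc.1 hp
  rw [blockMaxSet, ZMod.card_filter_range_natCast_mem_image (g := fun t => blockMax π t + 1)
    (fun t t' h => blockMax_injective (Nat.succ_injective h)) blockMax_add_one_lt hpL]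
  have h₁ := mul_card_blockMax_lt_le hP (p - 1)
  have h₂ : #{t | blockMax π t + 1 < p} = #{t | blockMax π t < p - 1} := by
    congr 1; ext; simp only [mem_filter, mem_univ, true_and]; omega
  rw [h₂]
  omega

theorem blockMax_eq_of_blockMaxSet_eq (hπ : Avoids312 π ∧ PatternDjU j π)
    (hσ : Avoids312 σ ∧ PatternDjU j σ) (h : blockMaxSet π = blockMaxSet σ) :
    blockMax π = blockMax σ := by
  have himage (τ : Equiv.Perm (Fin ((j + 1) * m))) :
      ((blockMaxSet τ).image ZMod.val : Set ℕ) = Set.range fun t => blockMax τ t + 1 := by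
    have hval (t : Fin m) :
        ((blockMax τ t + 1 : ℕ) : ZMod ((j + 1) * m + 1)).val = blockMax τ t + 1 :=
      ZMod.val_cast_of_lt (blockMax_add_one_lt t)
    rw [blockMaxSet, image_image, coe_image, coe_univ, Set.image_univ]
    simp only [Function.comp_def, hval]
  have hmono (τ : Equiv.Perm (Fin ((j + 1) * m))) (hτ : Avoids312 τ ∧ PatternDjU j τ) :
      StrictMono fun t => blockMax τ t + 1 :=
    fun t t' htt' => Nat.succ_lt_succ (blockMax_strictMono hτ.1 hτ.2 htt')
  have := (StrictMono.range_inj (hmono π hπ) (hmono σ hσ)).1 (by rw [← himage, ← himage, h])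
  exact funext fun t => Nat.succ_injective (congrFun this t)

theorem admissible_of_isBallot {c : ℕ → ℕ} (hc : StrictMonoOn c (Set.Iio m))
    (hcL : ∀ t < m, c t < (j + 1) * m + 1)
    (hb : IsBallot (j + 1) (univ.image fun t : Fin m => (c t : ZMod ((j + 1) * m + 1)))) :
    Admissible j m c := by
  refine ⟨hc, fun t ht => ?_, fun t ht => Nat.le_of_lt_succ (hcL t ht)⟩
  have hp : c t + 1 ≤ (j + 1) * m + 1 := hcL t ht
  have hbt := hb (c t + 1) (mem_Icc.2 ⟨by omega, hp⟩)
  rw [ZMod.card_filter_range_natCast_mem_image (g := fun t : Fin m => c t)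
    (fun t t' h => Fin.ext (hc.injOn t.isLt t'.isLt h)) (fun t => hcL t t.isLt) hp] at hbt
  have hle : t + 1 ≤ #{t' : Fin m | c t' < c t + 1} :=
    calc t + 1 = #(Iic (⟨t, ht⟩ : Fin m)) := by simp
      _ ≤ _ := card_le_card fun t' ht' => by
        simp only [mem_Iic, Fin.le_def, mem_filter, mem_univ, true_and] at ht' ⊢
        exact Nat.lt_succ_of_le (hc.monotoneOn t'.isLt ht ht')
  have := Nat.mul_le_mul_left (j + 1) hle
  omega

theorem exists_blockMaxSet_eq {s : Finset (ZMod ((j + 1) * m + 1))} (hs : #s = m)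
    (hb : IsBallot (j + 1) s) :
    ∃ π : Equiv.Perm (Fin ((j + 1) * m)), (Avoids312 π ∧ PatternDjU j π) ∧ blockMaxSet π = s := by
  set K := s.image ZMod.val
  have hK : #K = m := by rw [card_image_of_injective s (ZMod.val_injective _), hs]
  have himage :
      univ.image (fun t : Fin m => (Nat.nth (· ∈ K) t : ZMod ((j + 1) * m + 1))) = s := by
    have := congrArg (image (Nat.cast : ℕ → ZMod ((j + 1) * m + 1))) (Nat.image_nth_finset hK)
    simpa [K, image_image, Function.comp_def] using this
  have hlt (t : ℕ) (ht : t < m) : Nat.nth (· ∈ K) t < (j + 1) * m + 1 := by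
    obtain ⟨x, -, hx⟩ := mem_image.1 (Nat.nth_mem_finset hK ht)
    rw [← hx]
    exact ZMod.val_lt x
  have ha := admissible_of_isBallot (Nat.strictMonoOn_nth_finset hK) hlt (himage ▸ hb)
  refine ⟨ofAdmissible ha, ⟨avoids312_ofAdmissible ha, patternDjU_ofAdmissible ha⟩, ?_⟩
  simp only [← himage, blockMaxSet, blockMax_ofAdmissible]

noncomputable def validEquivBallot :
    {π : Equiv.Perm (Fin ((j + 1) * m)) // Avoids312 π ∧ PatternDjU j π} ≃
      {s : Finset (ZMod ((j + 1) * m + 1)) // #s = m ∧ IsBallot (j + 1) s} :=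
  Equiv.ofBijective (fun π => ⟨blockMaxSet π.1, card_blockMaxSet, isBallot_blockMaxSet π.2.2⟩)
    ⟨fun π σ h => Subtype.ext (eq_of_blockMax_eq π.2 σ.2
        (blockMax_eq_of_blockMaxSet_eq π.2 σ.2 (congrArg Subtype.val h))),
      fun s => by
        obtain ⟨π, hπ, hs⟩ := exists_blockMaxSet_eq s.2.1 s.2.2
        exact ⟨⟨π, hπ⟩, Subtype.ext hs⟩⟩

end Equivalence

theorem card_pattern_avoids312_eq_fussCatalan_general (j m : ℕ) :
    Nat.card {π : Equiv.Perm (Fin ((j + 1) * m)) // Avoids312 π ∧ PatternDjU j π} =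
      ((j + 1) * m).choose m / (j * m + 1) := by
  set B := Nat.card {s : Finset (ZMod ((j + 1) * m + 1)) // #s = m ∧ IsBallot (j + 1) s}
  have hrot : ((j + 1) * m + 1) * B = ((j + 1) * m + 1).choose m :=
    card_isBallot_mul (j + 1) m rfl
  have hsub : (j + 1) * m + 1 - m = j * m + 1 := by rw [add_mul, one_mul]; omega
  have hchoose : ((j + 1) * m).choose m = B * (j * m + 1) := by
    refine Nat.eq_of_mul_eq_mul_right (by omega : 0 < (j + 1) * m + 1) ?_
    rw [Nat.choose_mul_succ_eq, ← hrot, hsub]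
    ring
  rw [Nat.card_congr validEquivBallot, hchoose, Nat.mul_div_cancel _ (by omega)]

/-- **Corollary.** For all `j ≥ 1` and `m ≥ 1`, the number of 312-avoiding permutations
of `{1,…,(j+1)m}` whose up/down pattern is `D^j U D^j U ⋯ U D^j` (`m` blocks of `j`
consecutive `D`'s separated by single `U`'s) equals the Fuss–Catalan number
`(1/(jm+1)) * binom((j+1)m, m)` (the number of `(j+2)`-angulations of a convex
`(jm+2)`-gon). -/
theorem card_pattern_avoids312_eq_fussCatalan (j m : ℕ) (hj : 1 ≤ j) (hm : 1 ≤ m) :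
    Nat.card {π : Equiv.Perm (Fin ((j + 1) * m)) // Avoids312 π ∧ PatternDjU j π} =
      ((j + 1) * m).choose m / (j * m + 1) :=
  card_pattern_avoids312_eq_fussCatalan_general j m
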